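/- (The stabilisation map sends concordance embeddings to concordance embeddings, Section 2.2.) If e is an injective continuous concordance map of P in M, then σ(e) : P×J×I → M×J×I is injective. In particular, if P is compact Hausdorff and M is Hausdorff, then σ carries topological concordance embeddings (injective continuous concordance maps, which are then closed topological embeddings) of P in M to topological concordance embeddings of P×J in M×J. -/

import Mathlib

/-!
STATEMENT 4: the stabilisation map sends concordance embeddings to concordance embeddings.
-/
open Set unitInterval Topology

noncomputable section

abbrev JJ : Set ℝ := Set.Icc (-1 : ℝ) 1

/-- The polar parametrisation `Λ(r,θ) = ((1−r)cos(θ+π), (1−r)sin(θ+π) + 1)`. -/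
def Lam : ℝ × ℝ → ℝ × ℝ :=
  fun p => ((1 - p.1) * Real.cos (p.2 + Real.pi), (1 - p.1) * Real.sin (p.2 + Real.pi) + 1)

def D1 : Set (ℝ × ℝ) := {z | z.1 ∈ JJ ∧ z.2 ∈ Set.Icc (0:ℝ) 1 ∧ z.1 ^ 2 + (z.2 - 1) ^ 2 ≤ 1}
def D2 : Set (ℝ × ℝ) := {z | z.1 ∈ JJ ∧ z.2 ∈ Set.Icc (0:ℝ) 1 ∧ 1 ≤ z.1 ^ 2 + (z.2 - 1) ^ 2}

/-- `φ : P × I → M × I` is a continuous concordance map of `P` in `M` relative to `A`. -/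
def IsConcMap {M : Type} [TopologicalSpace M] (P A : Set M) (φ : ↥P × ↥I → M × ↥I) : Prop :=
  Continuous φ ∧
  (∀ x : ↥P × ↥I, ((φ x).2 = 0 ↔ x.2 = 0) ∧ ((φ x).2 = 1 ↔ x.2 = 1)) ∧
  ∃ U : Set (↥P × ↥I), IsOpen U ∧
    ({x : ↥P × ↥I | x.2 = 0} ∪ {x : ↥P × ↥I | (x.1 : M) ∈ A}) ⊆ U ∧
    ∀ x ∈ U, φ x = ((x.1 : M), x.2)

/-- `F : P × J × I → M × J × I` satisfies the two clauses defining the stabilisation `σ(e)`: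
on `P × D₁` it is given (in the polar coordinates `Λ`) by
`σ(e)(p, Λ(r,θ)) = (e_M(p,r), Λ(e_I(p,r), θ))`, and on `P × D₂` it is the inclusion. -/
def IsSigmaOf {M : Type} [TopologicalSpace M] (P : Set M)
    (e : ↥P × ↥I → M × ↥I) (F : ↥P × ↥JJ × ↥I → M × ↥JJ × ↥I) : Prop :=
  (∀ (p : ↥P) (s : ↥JJ) (t : ↥I) (r : ↥I) (θ : ℝ), θ ∈ Set.Icc 0 Real.pi →
    ((s : ℝ), (t : ℝ)) = Lam ((r : ℝ), θ) →
    (F (p, s, t)).1 = (e (p, r)).1 ∧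
    (((F (p, s, t)).2.1 : ℝ), ((F (p, s, t)).2.2 : ℝ)) = Lam (((e (p, r)).2 : ℝ), θ)) ∧
  (∀ (p : ↥P) (s : ↥JJ) (t : ↥I), ((s : ℝ), (t : ℝ)) ∈ D2 → F (p, s, t) = ((p : M), s, t))

/-- `F : P × J × I → M × J × I` is a continuous concordance map of `P × J` in `M × J`
relative to `(A × J) ∪ (P × {−1,1})`. -/
def IsConcMapJ {M : Type} [TopologicalSpace M] (P A : Set M)
    (F : ↥P × ↥JJ × ↥I → M × ↥JJ × ↥I) : Prop :=
  Continuous F ∧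
  (∀ x : ↥P × ↥JJ × ↥I, ((F x).2.2 = 0 ↔ x.2.2 = 0) ∧ ((F x).2.2 = 1 ↔ x.2.2 = 1)) ∧
  ∃ U : Set (↥P × ↥JJ × ↥I), IsOpen U ∧
    ({x : ↥P × ↥JJ × ↥I | x.2.2 = 0} ∪
     {x : ↥P × ↥JJ × ↥I | (x.1 : M) ∈ A ∨ (x.2.1 : ℝ) = -1 ∨ (x.2.1 : ℝ) = 1}) ⊆ U ∧
    ∀ x ∈ U, F x = ((x.1 : M), x.2.1, x.2.2)

/-!
In the polar coordinates `Λ` about `(0, 1)`, `σ(e)` keeps the angle `θ` and sends the arc at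
distance `1 - r` from the centre to the arc at distance `1 - e_I(p, r)`; on `D₁` this is a
homothety about `(0, 1)`. Since `0 ≤ e_I ≤ 1`, `σ(e)` maps `P × D₁` and its complement into
themselves. On `P × D₁` the image determines `e_M(p, r)` and, through its distance from the
centre, `e_I(p, r)`; injectivity of `e` recovers `(p, r)`, and as `e_I(p, r) = 1` only for
`r = 1`, the homothety is invertible off the centre, which recovers the angle. Continuity at
the centre holds because the ratio of the homothety, times the distance, is `1 - e_I → 0`.
-/

namespace IsConcMap

variable {M : Type} [TopologicalSpace M] {P A : Set M} {e : ↥P × ↥I → M × ↥I}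

lemma apply_zero (he : IsConcMap P A e) (p : ↥P) : e (p, 0) = ((p : M), 0) := by
  obtain ⟨-, -, U, -, hU, hid⟩ := he
  exact hid (p, 0) (hU (Or.inl rfl))

lemma snd_eq_one_iff (he : IsConcMap P A e) (x : ↥P × ↥I) : (e x).2 = 1 ↔ x.2 = 1 :=
  (he.2.1 x).2

lemma snd_apply_one (he : IsConcMap P A e) (p : ↥P) : (e (p, 1)).2 = 1 :=
  (he.snd_eq_one_iff _).mpr rfl

end IsConcMap

namespace Stabilisation

open AffineMap

def radius (z : ℝ × ℝ) : ℝ := √(z.1 ^ 2 + (z.2 - 1) ^ 2)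

lemma radius_nonneg (z : ℝ × ℝ) : 0 ≤ radius z := Real.sqrt_nonneg _

lemma radius_sq (z : ℝ × ℝ) : radius z ^ 2 = z.1 ^ 2 + (z.2 - 1) ^ 2 :=
  Real.sq_sqrt (by positivity)

lemma radius_eq_zero_iff {z : ℝ × ℝ} : radius z = 0 ↔ z = (0, 1) := by
  rw [radius, Real.sqrt_eq_zero (by positivity), Prod.ext_iff]
  constructor
  · intro h; constructor <;> nlinarith [sq_nonneg z.1, sq_nonneg (z.2 - 1)]
  · rintro ⟨h1, h2⟩; simp [h1, h2]

lemma norm_sub_le_radius (z : ℝ × ℝ) : ‖z - (0, 1)‖ ≤ radius z := by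
  have h1 : |z.1| ≤ radius z := Real.abs_le_sqrt (by nlinarith [sq_nonneg (z.2 - 1)])
  have h2 : |z.2 - 1| ≤ radius z := Real.abs_le_sqrt (by nlinarith [sq_nonneg z.1])
  simpa [Prod.norm_def] using And.intro h1 h2

lemma radius_homothety (k : ℝ) (z : ℝ × ℝ) :
    radius (homothety (0, 1) k z) = |k| * radius z := by
  rw [radius, radius, ← Real.sqrt_sq_eq_abs, ← Real.sqrt_mul (sq_nonneg k)]
  congr 1
  simp only [homothety_apply, vsub_eq_sub, vadd_eq_add, Prod.fst_add, Prod.snd_add,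
    Prod.smul_fst, Prod.smul_snd, Prod.fst_sub, Prod.snd_sub, smul_eq_mul]
  ring

lemma Lam_eq_homothety {r : ℝ} (hr : r ≠ 1) (r' θ : ℝ) :
    Lam (r', θ) = homothety (0, 1) ((1 - r') / (1 - r)) (Lam (r, θ)) := by
  have : 1 - r ≠ 0 := sub_ne_zero.mpr (Ne.symm hr)
  simp only [Lam, homothety_apply, vsub_eq_sub, vadd_eq_add, Prod.mk_sub_mk, Prod.smul_mk,
    smul_eq_mul, Prod.mk_add_mk, Prod.mk.injEq]
  constructor <;> field_simp <;> ring

lemma exists_Lam_eq {z : ℝ × ℝ} (hz : z.2 ≤ 1) :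
    ∃ θ ∈ Icc 0 Real.pi, Lam (1 - radius z, θ) = z := by
  rcases eq_or_ne (radius z) 0 with h0 | h0
  · refine ⟨0, ⟨le_rfl, Real.pi_pos.le⟩, ?_⟩
    rw [h0, radius_eq_zero_iff.mp h0]
    simp [Lam]
  have hpos : 0 < radius z := (radius_nonneg z).lt_of_ne' h0
  have hsq := radius_sq z
  have hcos : |-(z.1 / radius z)| ≤ 1 := by
    rw [abs_neg, abs_div, abs_of_pos hpos, div_le_one hpos]
    exact Real.abs_le_sqrt (by nlinarith [sq_nonneg (z.2 - 1)])
  refine ⟨Real.arccos (-(z.1 / radius z)), ⟨Real.arccos_nonneg _, Real.arccos_le_pi _⟩, ?_⟩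
  have hsin : Real.sin (Real.arccos (-(z.1 / radius z))) = (1 - z.2) / radius z := by
    rw [Real.sin_arccos, ← Real.sqrt_sq (div_nonneg (sub_nonneg.mpr hz) hpos.le)]
    congr 1
    field_simp
    linarith
  simp only [Lam, Real.cos_add_pi, Real.sin_add_pi, hsin,
    Real.cos_arccos (abs_le.mp hcos).1 (abs_le.mp hcos).2]
  ext <;> field_simp <;> ring

/-- The parameter `r` with `z = Λ(r, θ)`, clamped to `I` off `D₁`. -/
def radialParam (z : ℝ × ℝ) : I := projIcc 0 1 zero_le_one (1 - radius z)

lemma coe_radialParam {z : ℝ × ℝ} (hz : radius z ≤ 1) : (radialParam z : ℝ) = 1 - radius z :=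
  congrArg Subtype.val (projIcc_of_mem _ ⟨by linarith, by linarith [radius_nonneg z]⟩)

lemma radialParam_eq_one {z : ℝ × ℝ} (hz : radius z = 0) : radialParam z = 1 :=
  Subtype.ext (by simp [coe_radialParam (hz.trans_le zero_le_one), hz])

lemma radialParam_eq_zero {z : ℝ × ℝ} (hz : radius z = 1) : radialParam z = 0 :=
  Subtype.ext (by simp [coe_radialParam hz.le, hz])

lemma continuous_radialParam : Continuous radialParam := by
  refine continuous_projIcc.comp (continuous_const.sub (Real.continuous_sqrt.comp ?_))
  fun_prop

lemma continuous_div_smul_of_norm_le {X E : Type*} [TopologicalSpace X] [NormedAddCommGroup E]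
    [NormedSpace ℝ E] {a ρ : X → ℝ} {g : X → E} (ha : Continuous a) (hρ : Continuous ρ)
    (hg : Continuous g) (hgρ : ∀ x, ‖g x‖ ≤ ρ x) (ha₀ : ∀ x, ρ x = 0 → a x = 0) :
    Continuous fun x => (a x / ρ x) • g x := by
  refine continuous_iff_continuousAt.mpr fun x₀ => ?_
  rcases ne_or_eq (ρ x₀) 0 with h | h
  · exact ((ha.continuousAt.div hρ.continuousAt h).smul hg.continuousAt)
  -- near a zero of `ρ` the map is squeezed by `|a|`, since `‖g‖ / ρ ≤ 1`
  have hbound : ∀ x, ‖(a x / ρ x) • g x‖ ≤ |a x| := fun x => by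
    rw [norm_smul, norm_div, Real.norm_eq_abs, Real.norm_eq_abs, div_mul_eq_mul_div,
      mul_div_assoc]
    rcases (abs_nonneg (ρ x)).eq_or_lt with h0 | h0
    · simp [← h0]
    · exact mul_le_of_le_one_right (abs_nonneg _)
        ((div_le_one h0).mpr ((hgρ x).trans (le_abs_self _)))
  have hval : (a x₀ / ρ x₀) • g x₀ = 0 := by simp [h]
  have ha' : Filter.Tendsto (fun x => |a x|) (𝓝 x₀) (𝓝 0) := by
    simpa [ha₀ x₀ h] using ha.abs.tendsto x₀
  simpa [ContinuousAt, hval] using squeeze_zero_norm hbound ha'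

variable {M : Type} [TopologicalSpace M] {P A : Set M} {e : ↥P × ↥I → M × ↥I}

/-- `σ(e)` in Cartesian coordinates: on `D₁` it is the homothety about `(0, 1)` carrying the
arc `Λ(r, ·)` onto the arc `Λ(e_I(p, r), ·)`. -/
def sigmaMap (e : ↥P × ↥I → M × ↥I) (x : ↥P × ℝ × ℝ) : M × ℝ × ℝ :=
  if radius x.2 ≤ 1 then
    ((e (x.1, radialParam x.2)).1,
      homothety (0, 1) ((1 - ((e (x.1, radialParam x.2)).2 : ℝ)) / radius x.2) x.2)
  else ((x.1 : M), x.2)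

lemma radius_sigmaMap_of_le (he : IsConcMap P A e) {x : ↥P × ℝ × ℝ} (hx : radius x.2 ≤ 1) :
    radius (sigmaMap e x).2 = 1 - (e (x.1, radialParam x.2)).2 := by
  have hc := (e (x.1, radialParam x.2)).2.2
  rw [sigmaMap, if_pos hx, radius_homothety]
  rcases eq_or_ne (radius x.2) 0 with h0 | h0
  · simp [h0, radialParam_eq_one h0, he.snd_apply_one]
  · rw [abs_div, abs_of_nonneg (sub_nonneg.mpr hc.2), abs_of_nonneg (radius_nonneg _),
      div_mul_cancel₀ _ h0]

lemma radius_sigmaMap_le_one_iff (he : IsConcMap P A e) (x : ↥P × ℝ × ℝ) :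
    radius (sigmaMap e x).2 ≤ 1 ↔ radius x.2 ≤ 1 := by
  by_cases hx : radius x.2 ≤ 1
  · simp only [hx, iff_true, radius_sigmaMap_of_le he hx]
    linarith [(e (x.1, radialParam x.2)).2.2.1]
  · simp [sigmaMap, hx]

lemma continuous_sigmaMap (he : IsConcMap P A e) : Continuous (sigmaMap e) := by
  have hρ : Continuous fun x : ↥P × ℝ × ℝ => radius x.2 :=
    Real.continuous_sqrt.comp (by fun_prop)
  have heρ : Continuous fun x : ↥P × ℝ × ℝ => e (x.1, radialParam x.2) :=
    he.1.comp (continuous_fst.prodMk (continuous_radialParam.comp continuous_snd))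
  have hscale : Continuous fun x : ↥P × ℝ × ℝ =>
      homothety (0, 1) ((1 - ((e (x.1, radialParam x.2)).2 : ℝ)) / radius x.2) x.2 := by
    simp only [homothety_apply, vsub_eq_sub, vadd_eq_add]
    refine (continuous_div_smul_of_norm_le ?_ hρ (by fun_prop) (fun x => norm_sub_le_radius _)
      fun x hx => ?_).add continuous_const
    · exact continuous_const.sub (continuous_subtype_val.comp (continuous_snd.comp heρ))
    · simp [radialParam_eq_one hx, he.snd_apply_one]
  refine ((continuous_fst.comp heρ).prodMk hscale).if_le
    ((continuous_subtype_val.comp continuous_fst).prodMk continuous_snd) hρ continuous_const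
    fun x hx => ?_
  simp [radialParam_eq_zero hx, hx, he.apply_zero]

lemma injective_sigmaMap (he : IsConcMap P A e) (heInj : Function.Injective e) :
    Function.Injective (sigmaMap e) := by
  rintro ⟨p, z⟩ ⟨q, w⟩ h
  have hzw : radius z ≤ 1 ↔ radius w ≤ 1 := by
    rw [← radius_sigmaMap_le_one_iff he (p, z), ← radius_sigmaMap_le_one_iff he (q, w), h]
  by_cases hz : radius z ≤ 1
  swap
  · simp only [sigmaMap, if_neg hz, if_neg (hzw.not.mp hz), Prod.mk.injEq] at h
    exact Prod.ext (Subtype.ext h.1) h.2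
  have hw := hzw.mp hz
  have hI : ((e (p, radialParam z)).2 : ℝ) = (e (q, radialParam w)).2 := by
    have := congrArg (radius ·.2) h
    rw [radius_sigmaMap_of_le he (x := (p, z)) hz, radius_sigmaMap_of_le he (x := (q, w)) hw]
      at this
    linarith
  simp only [sigmaMap, if_pos hz, if_pos hw, Prod.mk.injEq] at h
  obtain ⟨hM, hH⟩ := h
  obtain ⟨rfl, hr⟩ := Prod.mk.inj (heInj (Prod.ext hM (Subtype.ext hI)))
  have hρ : radius z = radius w := by
    have := congrArg Subtype.val hr
    rw [coe_radialParam hz, coe_radialParam hw] at this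
    linarith
  rw [← hr, ← hρ] at hH
  rcases eq_or_ne (radius z) 0 with h0 | h0
  · rw [radius_eq_zero_iff.mp h0, radius_eq_zero_iff.mp (hρ.symm.trans h0)]
  -- off the centre `r ≠ 1`, so `e_I(p, r) ≠ 1` and the homothety is invertible
  have hI1 : ((e (p, radialParam z)).2 : ℝ) ≠ 1 := fun h1 => by
    have := congrArg Subtype.val ((he.snd_eq_one_iff _).mp (Subtype.ext h1))
    simp [coe_radialParam hz, h0] at this
  have hk : (1 - ((e (p, radialParam z)).2 : ℝ)) / radius z ≠ 0 :=
    div_ne_zero (sub_ne_zero.mpr (Ne.symm hI1)) h0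
  rw [homothety_injective _ hk hH]

lemma _root_.IsSigmaOf.apply_eq_sigmaMap (he : IsConcMap P A e)
    {F : ↥P × ↥JJ × ↥I → M × ↥JJ × ↥I} (hF : IsSigmaOf P e F) (x : ↥P × ↥JJ × ↥I) :
    Prod.map id (Prod.map Subtype.val Subtype.val) (F x) =
      sigmaMap e (Prod.map id (Prod.map Subtype.val Subtype.val) x) := by
  obtain ⟨p, s, t⟩ := x
  set z : ℝ × ℝ := ((s : ℝ), (t : ℝ))
  change ((F (p, s, t)).1, ((F (p, s, t)).2.1 : ℝ), ((F (p, s, t)).2.2 : ℝ)) = sigmaMap e (p, z)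
  by_cases hz : radius z ≤ 1
  swap
  · have hD2 : z ∈ D2 := ⟨s.2, t.2, by nlinarith [radius_sq z]⟩
    rw [sigmaMap, if_neg hz, hF.2 p s t hD2]
  obtain ⟨θ, hθ, hLam⟩ := exists_Lam_eq (z := z) t.2.2
  rw [← coe_radialParam hz] at hLam
  obtain ⟨hM, hL⟩ := hF.1 p s t (radialParam z) θ hθ hLam.symm
  rw [sigmaMap, if_pos hz, Prod.mk.injEq]
  refine ⟨hM, hL.trans ?_⟩
  rcases eq_or_ne (radius z) 0 with h0 | h0
  · rw [radialParam_eq_one h0, he.snd_apply_one, radius_eq_zero_iff.mp h0]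
    simp [Lam]
  have hr1 : (radialParam z : ℝ) ≠ 1 := by simp [coe_radialParam hz, h0]
  rw [Lam_eq_homothety hr1, hLam, coe_radialParam hz, sub_sub_cancel]

end Stabilisation

theorem statement4_general {M : Type} [TopologicalSpace M] (P A : Set M)
    (e : ↥P × ↥I → M × ↥I) (he : IsConcMap P A e) (heInj : Function.Injective e)
    (F : ↥P × ↥JJ × ↥I → M × ↥JJ × ↥I) (hF : IsSigmaOf P e F) :
    -- σ(e) = F is injective;
    Function.Injective F ∧
    -- in particular, if `P` is compact Hausdorff and `M` is Hausdorff, then both the injective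
    -- continuous concordance map `e` and its stabilisation `σ(e) = F` are closed topological
    -- embeddings.
    (∀ (_ : T2Space M) (_ : IsCompact P) (_ : T2Space ↥P),
      IsClosedEmbedding e ∧ IsClosedEmbedding F) := by
  have hcomp := funext (hF.apply_eq_sigmaMap he)
  have hval : IsEmbedding
      (Prod.map (id : M → M) (Prod.map (Subtype.val : JJ → ℝ) (Subtype.val : I → ℝ))) :=
    IsEmbedding.id.prodMap (IsEmbedding.subtypeVal.prodMap IsEmbedding.subtypeVal)
  have hinj : Function.Injective F := by
    refine Function.Injective.of_comp (f := Prod.map id (Prod.map Subtype.val Subtype.val)) ?_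
    rw [Function.comp_def, hcomp]
    exact (Stabilisation.injective_sigmaMap he heInj).comp
      (Function.injective_id.prodMap (Subtype.val_injective.prodMap Subtype.val_injective))
  refine ⟨hinj, fun _ hP _ => ?_⟩
  have : CompactSpace ↥P := isCompact_iff_compactSpace.mp hP
  have hFc : Continuous F := by
    rw [hval.continuous_iff, Function.comp_def, hcomp]
    exact (Stabilisation.continuous_sigmaMap he).comp (by fun_prop)
  exact ⟨he.1.isClosedEmbedding heInj, hFc.isClosedEmbedding hinj⟩

theorem statement4 {M : Type} [TopologicalSpace M] (P A : Set M) (hAP : A ⊆ P)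
    (e : ↥P × ↥I → M × ↥I) (he : IsConcMap P A e) (heInj : Function.Injective e)
    (F : ↥P × ↥JJ × ↥I → M × ↥JJ × ↥I) (hF : IsSigmaOf P e F) :
    -- σ(e) = F is injective;
    Function.Injective F ∧
    -- in particular, if `P` is compact Hausdorff and `M` is Hausdorff, then both the injective
    -- continuous concordance map `e` and its stabilisation `σ(e) = F` are closed topological
    -- embeddings.
    (∀ (_ : T2Space M) (_ : IsCompact P) (_ : T2Space ↥P),
      IsClosedEmbedding e ∧ IsClosedEmbedding F) :=
  statement4_general P A e he heInj F hF
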